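/- Let (X, ω) be a symplectic vector space with co-isotropic subspace W, and let (λ, μ) be a Fredholm pair of Lagrangian subspaces of index 0 with W^ω ⊆ λ ⊆ W. Then dim(W^ω ∩ μ) = dim X/(W+μ) < ∞, W+μ = W^{ωω}+μ, and (R_W(λ), R_W(μ)) is a Fredholm pair of Lagrangian subspaces of the reduced symplectic space W/W^ω with index 0. -/
import Mathlib


universe u

/-- The annihilator `λ^ω = {y ∈ X : ω(x,y) = 0 for all x ∈ λ}` of a subspace of a
complex vector space with a sesquilinear form `ω` (linear in the first,
conjugate-linear in the second variable). -/
noncomputable def ann {X : Type*} [AddCommGroup X] [Module ℂ X]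
    (ω : X →ₗ[ℂ] X →ₗ⋆[ℂ] ℂ) (l : Submodule ℂ X) : Submodule ℂ X :=
  ⨅ x ∈ l, LinearMap.ker (ω x)

namespace Red

open Submodule Module LinearMap Function

variable {X : Type u} [AddCommGroup X] [Module ℂ X] (ω : X →ₗ[ℂ] X →ₗ⋆[ℂ] ℂ)

lemma mem_ann {l : Submodule ℂ X} {y : X} : y ∈ ann ω l ↔ ∀ x ∈ l, ω x y = 0 := by
  simp [ann, Submodule.mem_iInf, LinearMap.mem_ker]

lemma ann_antitone {a b : Submodule ℂ X} (h : a ≤ b) : ann ω b ≤ ann ω a := by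
  intro y hy
  rw [mem_ann] at hy ⊢
  exact fun x hx => hy x (h hx)

variable (hskew : ∀ x y, ω y x = - (starRingEnd ℂ) (ω x y))

include hskew in
lemma mem_ann' {l : Submodule ℂ X} {y : X} : y ∈ ann ω l ↔ ∀ x ∈ l, ω y x = 0 := by
  rw [mem_ann]
  constructor
  · intro h x hx; rw [hskew x y, h x hx]; simp
  · intro h x hx
    have := hskew y x
    rw [h x hx] at this
    simpa using this

include hskew in
lemma le_ann_ann (a : Submodule ℂ X) : a ≤ ann ω (ann ω a) := by
  intro x hx
  rw [mem_ann' ω hskew]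
  intro y hy
  rw [mem_ann] at hy
  exact hy x hx

lemma ann_sup {a b : Submodule ℂ X} : ann ω (a ⊔ b) = ann ω a ⊓ ann ω b := by
  apply le_antisymm
  · exact le_inf (ann_antitone ω le_sup_left) (ann_antitone ω le_sup_right)
  · intro y hy
    rw [mem_ann]
    intro x hx
    obtain ⟨u, hu, v, hv, rfl⟩ := Submodule.mem_sup.mp hx
    have h1 := (mem_ann ω).mp hy.1 u hu
    have h2 := (mem_ann ω).mp hy.2 v hv
    rw [map_add]
    simp [LinearMap.add_apply, h1, h2]

/-- The conjugate-dual pairing map `P → ConjDual (X⧸C)` induced by `ω`. -/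
noncomputable def pairS (C P : Submodule ℂ X) (h : ∀ n ∈ P, ∀ z ∈ C, ω z n = 0) :
    ↥P →ₗ[ℂ] ((X ⧸ C) →ₗ⋆[ℂ] ℂ) where
  toFun n := Submodule.liftQ C
    { toFun := fun x => (starRingEnd ℂ) (ω x ↑n)
      map_add' := by intro x y; simp only [map_add, LinearMap.add_apply]
      map_smul' := by
        intro c x
        simp [mul_comm] }
    (by intro z hz; simp [LinearMap.mem_ker, h ↑n n.2 z hz])
  map_add' n₁ n₂ := by
    apply LinearMap.ext
    intro q
    obtain ⟨x, rfl⟩ := Submodule.mkQ_surjective C q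
    simp [Submodule.liftQ_apply]
  map_smul' c n := by
    apply LinearMap.ext
    intro q
    obtain ⟨x, rfl⟩ := Submodule.mkQ_surjective C q
    simp [Submodule.liftQ_apply, mul_comm]

@[simp] lemma pairS_apply (C P : Submodule ℂ X) (h : ∀ n ∈ P, ∀ z ∈ C, ω z n = 0)
    (n : ↥P) (x : X) :
    pairS ω C P h n (Submodule.Quotient.mk x) = (starRingEnd ℂ) (ω x ↑n) := rfl

include hskew in
lemma pairS_injective (hnd : ∀ x, (∀ y, ω x y = 0) → x = 0)
    (C P : Submodule ℂ X) (h : ∀ n ∈ P, ∀ z ∈ C, ω z n = 0) :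
    Injective (pairS ω C P h) := by
  rw [injective_iff_map_eq_zero]
  intro n hn
  have hz : ∀ x : X, ω x ↑n = 0 := by
    intro x
    have := congrArg (fun f => f (Submodule.Quotient.mk x)) hn
    simpa using this
  have : (n : X) = 0 := by
    apply hnd
    intro y
    rw [hskew y ↑n, hz y]
    simp
  exact Subtype.ext this

/-- The pairing map `(X⧸C) → ConjDual P` induced by `ω`. -/
noncomputable def pairT (C P : Submodule ℂ X) (h : ∀ n ∈ P, ∀ z ∈ C, ω z n = 0) :
    (X ⧸ C) →ₗ[ℂ] (↥P →ₗ⋆[ℂ] ℂ) :=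
  Submodule.liftQ C
    { toFun := fun x =>
        { toFun := fun n => ω x ↑n
          map_add' := by intro a b; simp
          map_smul' := by intro c a; simp }
      map_add' := by intro x y; apply LinearMap.ext; intro a; simp
      map_smul' := by intro c x; apply LinearMap.ext; intro a; simp }
    (by
      intro z hz
      rw [LinearMap.mem_ker]
      apply LinearMap.ext
      intro n
      simp [h ↑n n.2 z hz])

@[simp] lemma pairT_apply (C P : Submodule ℂ X) (h : ∀ n ∈ P, ∀ z ∈ C, ω z n = 0)
    (x : X) (n : ↥P) :
    pairT ω C P h (Submodule.Quotient.mk x) n = ω x ↑n := rfl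

/-- The conjugate dual of a finite-dimensional complex space has the same dimension. -/
lemma finrank_conjDual (V : Type u) [AddCommGroup V] [Module ℂ V] [FiniteDimensional ℂ V] :
    ∃ e : (V →ₗ⋆[ℂ] ℂ) ≃ₗ[ℂ] (Fin (finrank ℂ V) → ℂ), True := by
  classical
  set n := finrank ℂ V
  let b : Basis (Fin n) ℂ V := Module.finBasis ℂ V
  let e : (V →ₗ⋆[ℂ] ℂ) →ₗ[ℂ] (Fin n → ℂ) :=
    { toFun := fun f i => f (b i)
      map_add' := by intro f g; funext i; simp
      map_smul' := by intro c f; funext i; simp }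
  have hinj : Injective e := by
    rw [injective_iff_map_eq_zero]
    intro f hf
    have hb : ∀ i, f (b i) = 0 := by
      intro i
      exact congrFun hf i
    apply LinearMap.ext
    intro x
    have hx : x ∈ Submodule.span ℂ (Set.range ⇑b) := by
      rw [b.span_eq]; trivial
    simp only [LinearMap.zero_apply]
    induction hx using Submodule.span_induction with
    | mem x hx => obtain ⟨i, rfl⟩ := hx; exact hb i
    | zero => simp
    | add x y _ _ hx hy => rw [map_add, hx, hy, add_zero]
    | smul c x _ hx => rw [LinearMap.map_smulₛₗ, hx, smul_zero]
  have hsurj : Surjective e := by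
    intro g
    let F : V →ₗ[ℂ] ℂ := b.constr ℂ (fun i => (starRingEnd ℂ) (g i))
    refine ⟨{ toFun := fun x => (starRingEnd ℂ) (F x)
              map_add' := by intro x y; simp
              map_smul' := by intro c x; simp [mul_comm] }, ?_⟩
    funext i
    show (starRingEnd ℂ) (F (b i)) = g i
    rw [Basis.constr_basis]
    simp
  exact ⟨LinearEquiv.ofBijective e ⟨hinj, hsurj⟩, trivial⟩


variable (hnd : ∀ x, (∀ y, ω x y = 0) → x = 0)
variable {W l m : Submodule ℂ X}
variable (hl : l = ann ω l) (hm : m = ann ω m)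
variable [FiniteDimensional ℂ ↥(l ⊓ m)] [FiniteDimensional ℂ (X ⧸ (l ⊔ m))]
variable (hidx : Module.finrank ℂ ↥(l ⊓ m) = Module.finrank ℂ (X ⧸ (l ⊔ m)))

include hl hm in
lemma pair_vanish : ∀ n ∈ l ⊓ m, ∀ z ∈ l ⊔ m, ω z n = 0 := by
  intro n hn z hz
  have hn' : n ∈ ann ω (l ⊔ m) := by
    rw [ann_sup]
    exact ⟨by rw [← hl]; exact hn.1, by rw [← hm]; exact hn.2⟩
  exact (mem_ann ω).mp hn' z hz

include hskew hnd hl hm hidx in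
/-- Every linear functional vanishing on `l ⊔ m` is represented by an element of `l ⊓ m`. -/
lemma exists_rep (F : X →ₗ[ℂ] ℂ) (hF : ∀ z ∈ l ⊔ m, F z = 0) :
    ∃ n ∈ l ⊓ m, ∀ x, F x = ω x n := by
  classical
  set K := l ⊔ m with hK
  set S := pairS ω K (l ⊓ m) (pair_vanish ω hl hm) with hS
  obtain ⟨e, -⟩ := finrank_conjDual (X ⧸ K)
  have hfd : FiniteDimensional ℂ ((X ⧸ K) →ₗ⋆[ℂ] ℂ) := Module.Finite.equiv e.symm
  have hfr : finrank ℂ ((X ⧸ K) →ₗ⋆[ℂ] ℂ) = finrank ℂ (X ⧸ K) := by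
    rw [e.finrank_eq, finrank_fin_fun]
  have hSsurj : Function.Surjective S := by
    refine (LinearMap.injective_iff_surjective_of_finrank_eq_finrank ?_).mp
      (pairS_injective ω hskew hnd _ _ _)
    rw [hfr, ← hidx]
  have hker : K ≤ LinearMap.ker F := fun z hz => LinearMap.mem_ker.mpr (hF z hz)
  set Fbar := K.liftQ F hker with hFbar
  set G : (X ⧸ K) →ₗ⋆[ℂ] ℂ :=
    { toFun := fun q => (starRingEnd ℂ) (Fbar q)
      map_add' := by intro a b; simp
      map_smul' := by intro c q; simp [mul_comm] } with hG
  obtain ⟨n, hn⟩ := hSsurj G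
  refine ⟨↑n, n.2, fun x => ?_⟩
  have := congrArg (fun f => f (Submodule.Quotient.mk x)) hn
  simp only [hS, pairS_apply, hG, LinearMap.coe_mk, AddHom.coe_mk, hFbar,
    Submodule.liftQ_apply] at this
  exact ((starRingEnd ℂ).injective this).symm

include hskew hnd hl hm hidx in
/-- Separation: anything `ω`-orthogonal to `l ⊓ m` lies in `l ⊔ m`. -/
lemma sep_K {x : X} (hx : x ∉ l ⊔ m) : ∃ n ∈ l ⊓ m, ω x n ≠ 0 := by
  have hq : (Submodule.Quotient.mk x : X ⧸ (l ⊔ m)) ≠ 0 := by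
    rw [Ne, Submodule.Quotient.mk_eq_zero]; exact hx
  have : ¬ ∀ φ : Module.Dual ℂ (X ⧸ (l ⊔ m)), φ (Submodule.Quotient.mk x) = 0 := by
    rw [Module.forall_dual_apply_eq_zero_iff]; exact hq
  push_neg at this
  obtain ⟨φ, hφ⟩ := this
  obtain ⟨n, hn, hrep⟩ := exists_rep ω hskew hnd hl hm hidx (φ ∘ₗ (l ⊔ m).mkQ)
    (by intro z hz; simp [(Submodule.Quotient.mk_eq_zero _).mpr hz])
  refine ⟨n, hn, ?_⟩
  rw [← hrep x]
  simpa using hφ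

include hskew hnd hl hm hidx in
/-- Separation for `W ⊔ m`. -/
lemma sep_Wm (h2 : l ≤ W) {x : X} (hx : x ∉ W ⊔ m) :
    ∃ n ∈ ann ω W ⊓ m, ω x n ≠ 0 := by
  have hq : (Submodule.Quotient.mk x : X ⧸ (W ⊔ m)) ≠ 0 := by
    rw [Ne, Submodule.Quotient.mk_eq_zero]; exact hx
  have : ¬ ∀ φ : Module.Dual ℂ (X ⧸ (W ⊔ m)), φ (Submodule.Quotient.mk x) = 0 := by
    rw [Module.forall_dual_apply_eq_zero_iff]; exact hq
  push_neg at this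
  obtain ⟨φ, hφ⟩ := this
  have hvan : ∀ z ∈ W ⊔ m, (φ ∘ₗ (W ⊔ m).mkQ) z = 0 := by
    intro z hz; simp [(Submodule.Quotient.mk_eq_zero _).mpr hz]
  obtain ⟨n, hn, hrep⟩ := exists_rep ω hskew hnd hl hm hidx (φ ∘ₗ (W ⊔ m).mkQ)
    (by intro z hz
        exact hvan z (sup_le_sup_left le_rfl W |>.trans le_rfl <| by
          exact Submodule.mem_sup.mpr (by
            obtain ⟨u, hu, v, hv, rfl⟩ := Submodule.mem_sup.mp hz
            exact ⟨u, h2 hu, v, hv, rfl⟩)))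
  refine ⟨n, Submodule.mem_inf.mpr ⟨?_, hn.2⟩, ?_⟩
  · rw [mem_ann]
    intro z hz
    have := hrep z
    rw [hvan z (Submodule.mem_sup_left hz)] at this
    exact this.symm
  · rw [← hrep x]
    simpa using hφ


include hskew hnd hl hm hidx in
/-- Key extension step: an element of `l` that is `ω`-orthogonal to `m ⊓ W` agrees on `W`
with some element of `l ⊓ m`. -/
lemma lift_to_rep (h2 : l ≤ W) {a : X} (ha_l : a ∈ l) (ha : ∀ y ∈ m ⊓ W, ω y a = 0) :
    ∃ n ∈ l ⊓ m, ∀ w ∈ W, ω w a = ω w n := by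
  classical
  set K := l ⊔ m with hKdef
  set t : ↥W →ₗ[ℂ] (X ⧸ K) := K.mkQ ∘ₗ W.subtype with ht
  set h : ↥W →ₗ[ℂ] ℂ := (ω.flip a) ∘ₗ W.subtype with hh
  have happ : ∀ w : ↥W, h w = ω ↑w a := fun w => rfl
  have hker : LinearMap.ker t ≤ LinearMap.ker h := by
    intro w hw
    have hwK : (w : X) ∈ K := by
      have : K.mkQ ↑w = 0 := hw
      rwa [Submodule.mkQ_apply, Submodule.Quotient.mk_eq_zero] at this
    obtain ⟨p, hp, q, hq, hpq⟩ := Submodule.mem_sup.mp hwK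
    have hqW : q ∈ W := by
      have : q = (w : X) - p := by rw [← hpq]; abel
      rw [this]
      exact sub_mem w.2 (h2 hp)
    have h1 : ω p a = 0 := (mem_ann ω).mp (by rw [← hl]; exact ha_l) p hp
    have h2' : ω q a = 0 := ha q (Submodule.mem_inf.mpr ⟨hq, hqW⟩)
    rw [LinearMap.mem_ker, happ, ← hpq, map_add, LinearMap.add_apply, h1, h2', add_zero]
  set hbar0 : (↥W ⧸ LinearMap.ker t) →ₗ[ℂ] ℂ := (LinearMap.ker t).liftQ h hker with hhbar0
  set e := t.quotKerEquivRange with he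
  set hbar : ↥(LinearMap.range t) →ₗ[ℂ] ℂ := hbar0 ∘ₗ (e.symm : ↥(LinearMap.range t) ≃ₗ[ℂ] _) with hhbar
  obtain ⟨f, hf⟩ := LinearMap.exists_extend hbar
  set F : X →ₗ[ℂ] ℂ := f ∘ₗ K.mkQ with hF
  have hFvan : ∀ z ∈ K, F z = 0 := by
    intro z hz
    simp [hF, (Submodule.Quotient.mk_eq_zero _).mpr hz]
  obtain ⟨n, hn, hrep⟩ := exists_rep ω hskew hnd hl hm hidx F hFvan
  refine ⟨n, hn, fun w hw => ?_⟩
  have key : F w = ω w a := by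
    have hmem : t ⟨w, hw⟩ ∈ LinearMap.range t := LinearMap.mem_range_self t _
    have h1 : F w = f ((LinearMap.range t).subtype ⟨t ⟨w, hw⟩, hmem⟩) := rfl
    rw [h1, ← LinearMap.comp_apply, hf, hhbar]
    have h2' : e.symm ⟨t ⟨w, hw⟩, hmem⟩ = Submodule.Quotient.mk ⟨w, hw⟩ := by
      rw [LinearEquiv.symm_apply_eq]
      rfl
    simp only [LinearMap.comp_apply, LinearEquiv.coe_coe, h2', hhbar0,
      Submodule.liftQ_apply]
    exact happ ⟨w, hw⟩
  rw [← key, hrep w]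


include hskew hnd hl hm hidx in
lemma partA (h1 : ann ω W ≤ l) (h2 : l ≤ W) :
    FiniteDimensional ℂ ↥(ann ω W ⊓ m) ∧ FiniteDimensional ℂ (X ⧸ (W ⊔ m)) ∧
      finrank ℂ ↥(ann ω W ⊓ m) = finrank ℂ (X ⧸ (W ⊔ m)) := by
  classical
  haveI hfd1 : FiniteDimensional ℂ ↥(ann ω W ⊓ m) :=
    Submodule.finiteDimensional_of_le (inf_le_inf_right m h1)
  have hleWm : l ⊔ m ≤ W ⊔ m := sup_le_sup_right h2 m
  have hsurj : Function.Surjective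
      (Submodule.mapQ (l ⊔ m) (W ⊔ m) LinearMap.id (by simpa using hleWm)) := by
    intro q
    obtain ⟨x, rfl⟩ := Submodule.mkQ_surjective _ q
    exact ⟨Submodule.Quotient.mk x, by simp [Submodule.mapQ_apply]⟩
  haveI hfd2 : FiniteDimensional ℂ (X ⧸ (W ⊔ m)) := Module.Finite.of_surjective _ hsurj
  have hvan : ∀ n ∈ ann ω W ⊓ m, ∀ z ∈ W ⊔ m, ω z n = 0 := by
    intro n hn z hz
    obtain ⟨u, hu, v, hv, rfl⟩ := Submodule.mem_sup.mp hz
    have e1 : ω u n = 0 := (mem_ann ω).mp hn.1 u hu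
    have e2 : ω v n = 0 := (mem_ann ω).mp (by rw [← hm]; exact hn.2) v hv
    rw [map_add, LinearMap.add_apply, e1, e2, add_zero]
  obtain ⟨e1, -⟩ := finrank_conjDual (↥(ann ω W ⊓ m))
  obtain ⟨e2, -⟩ := finrank_conjDual (X ⧸ (W ⊔ m))
  haveI : FiniteDimensional ℂ (↥(ann ω W ⊓ m) →ₗ⋆[ℂ] ℂ) := Module.Finite.equiv e1.symm
  haveI : FiniteDimensional ℂ ((X ⧸ (W ⊔ m)) →ₗ⋆[ℂ] ℂ) := Module.Finite.equiv e2.symm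
  have hTinj : Function.Injective (pairT ω (W ⊔ m) (ann ω W ⊓ m) hvan) := by
    rw [injective_iff_map_eq_zero]
    intro q hq
    obtain ⟨x, rfl⟩ := Submodule.mkQ_surjective _ q
    rw [Submodule.mkQ_apply, Submodule.Quotient.mk_eq_zero]
    by_contra hx
    obtain ⟨n, hn, hne⟩ := sep_Wm ω hskew hnd hl hm hidx h2 hx
    apply hne
    have := congrArg (fun f => f (⟨n, hn⟩ : ↥(ann ω W ⊓ m))) hq
    simpa using this
  have hSinj : Function.Injective (pairS ω (W ⊔ m) (ann ω W ⊓ m) hvan) :=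
    pairS_injective ω hskew hnd _ _ _
  have le1 : finrank ℂ (X ⧸ (W ⊔ m)) ≤ finrank ℂ ↥(ann ω W ⊓ m) := by
    have := LinearMap.finrank_le_finrank_of_injective hTinj
    rwa [e1.finrank_eq, finrank_fin_fun] at this
  have le2 : finrank ℂ ↥(ann ω W ⊓ m) ≤ finrank ℂ (X ⧸ (W ⊔ m)) := by
    have := LinearMap.finrank_le_finrank_of_injective hSinj
    rwa [e2.finrank_eq, finrank_fin_fun] at this
  exact ⟨hfd1, hfd2, le_antisymm le2 le1⟩

include hskew hnd hl hm hidx in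
lemma partB (h2 : l ≤ W) : W ⊔ m = ann ω (ann ω W) ⊔ m := by
  apply le_antisymm (sup_le_sup_right (le_ann_ann ω hskew W) m)
  apply sup_le _ le_sup_right
  intro y hy
  by_contra hxy
  obtain ⟨n, hn, hne⟩ := sep_Wm ω hskew hnd hl hm hidx h2 hxy
  apply hne
  have h0 : ω n y = 0 := (mem_ann ω).mp hy n hn.1
  rw [hskew n y, h0]
  simp

include hskew hnd hl hm hidx in
lemma partD (hWco : ann ω W ≤ W) (h1 : ann ω W ≤ l) (h2 : l ≤ W) :
    (m ⊓ W ⊔ ann ω W) = ann ω (m ⊓ W ⊔ ann ω W) ⊓ W := by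
  apply le_antisymm
  · refine le_inf ?_ (sup_le inf_le_right hWco)
    intro y hy
    rw [mem_ann]
    intro z hz
    obtain ⟨z1, hz1, z2, hz2, rfl⟩ := Submodule.mem_sup.mp hz
    obtain ⟨y1, hy1, y2, hy2, rfl⟩ := Submodule.mem_sup.mp hy
    have e11 : ω z1 y1 = 0 := (mem_ann ω).mp (by rw [← hm]; exact hy1.1) z1 hz1.1
    have e12 : ω z1 y2 = 0 := (mem_ann ω).mp hy2 z1 hz1.2
    have e21 : ω z2 y1 = 0 := (mem_ann' ω hskew).mp hz2 y1 hy1.2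
    have e22 : ω z2 y2 = 0 := (mem_ann ω).mp hy2 z2 (hWco hz2)
    rw [map_add (ω (z1 + z2)) y1 y2, map_add ω z1 z2, LinearMap.add_apply,
      LinearMap.add_apply, e11, e12, e21, e22]
    simp
  · intro x hx
    obtain ⟨hxa, hxW⟩ := Submodule.mem_inf.mp hx
    have hxmW : ∀ y ∈ m ⊓ W, ω y x = 0 :=
      fun y hy => (mem_ann ω).mp hxa y (Submodule.mem_sup_left hy)
    have hxK : x ∈ l ⊔ m := by
      by_contra hc
      obtain ⟨n, hn, hne⟩ := sep_K ω hskew hnd hl hm hidx hc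
      apply hne
      have h0 : ω n x = 0 := hxmW n (Submodule.mem_inf.mpr ⟨hn.2, h2 hn.1⟩)
      rw [hskew n x, h0]
      simp
    obtain ⟨p, hp, q, hq, hpq⟩ := Submodule.mem_sup.mp hxK
    have hqW : q ∈ W := by
      have : q = x - p := by rw [← hpq]; abel
      rw [this]; exact sub_mem hxW (h2 hp)
    have hqmW : q ∈ m ⊓ W := Submodule.mem_inf.mpr ⟨hq, hqW⟩
    have hpval : ∀ y ∈ m ⊓ W, ω y p = 0 := by
      intro y hy
      have e1 : ω y x = 0 := hxmW y hy
      have e2 : ω y q = 0 := (mem_ann ω).mp (by rw [← hm]; exact hq) y hy.1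
      have : ω y x = ω y p + ω y q := by rw [← hpq]; exact map_add (ω y) p q
      rw [e1, e2, add_zero] at this
      exact this.symm
    obtain ⟨n, hn, hnrep⟩ := lift_to_rep ω hskew hnd hl hm hidx h2 hp hpval
    have hpn : p - n ∈ ann ω W := by
      rw [mem_ann]
      intro w hw
      rw [map_sub, hnrep w hw]
      simp
    have hx' : x = (n + q) + (p - n) := by rw [← hpq]; abel
    rw [hx']
    exact add_mem
      (Submodule.mem_sup_left
        (add_mem (Submodule.mem_inf.mpr ⟨hn.2, h2 hn.1⟩) hqmW))
      (Submodule.mem_sup_right hpn)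


omit hskew hnd hl hm hidx

lemma map_mkQ_self (p : Submodule ℂ X) : p.map p.mkQ = ⊥ := by
  rw [Submodule.eq_bot_iff]
  rintro q ⟨x, hx, rfl⟩
  rw [Submodule.mkQ_apply, Submodule.Quotient.mk_eq_zero]
  exact hx

lemma map_mkQ_eq_bot_of_le {p a : Submodule ℂ X} (h : a ≤ p) : a.map p.mkQ = ⊥ := by
  rw [Submodule.eq_bot_iff]
  rintro q ⟨x, hx, rfl⟩
  rw [Submodule.mkQ_apply, Submodule.Quotient.mk_eq_zero]
  exact h hx

lemma map_mkQ_inf {p a b : Submodule ℂ X} (hb : p ≤ b) :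
    a.map p.mkQ ⊓ b.map p.mkQ = (a ⊓ b).map p.mkQ := by
  apply le_antisymm
  · rintro q ⟨hqa, hqb⟩
    obtain ⟨x, hx, rfl⟩ := hqa
    obtain ⟨y, hy, hyx⟩ := hqb
    have hsub : y - x ∈ p := by
      rw [← Submodule.Quotient.eq p]
      exact hyx
    have hxb : x ∈ b := by
      have : x = y - (y - x) := by abel
      rw [this]
      exact sub_mem hy (hb hsub)
    exact ⟨x, ⟨hx, hxb⟩, rfl⟩
  · exact le_inf (Submodule.map_mono inf_le_left) (Submodule.map_mono inf_le_right)

end Red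

/-- Let `W` be co-isotropic and `(λ,μ)` a Fredholm pair of Lagrangians
of index `0` with `W^ω ⊆ λ ⊆ W`. Then `dim (W^ω ∩ μ) = dim X/(W+μ) < ∞`,
`W + μ = W^{ωω} + μ`, and `(R_W(λ), R_W(μ))` is a Fredholm pair of Lagrangian
subspaces of the reduced space `W/W^ω` of index `0`. Here `R_W(λ) = λ/W^ω` and
`R_W(μ) = (μ∩W + W^ω)/W^ω` are realized as images in `X/W^ω`; "Lagrangian in the
reduction" is expressed upstairs by equality with the annihilator intersected with
`W`. -/
theorem reduction_of_fredholm_lagrangian_pair {X : Type*} [AddCommGroup X] [Module ℂ X]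
    (ω : X →ₗ[ℂ] X →ₗ⋆[ℂ] ℂ)
    (hskew : ∀ x y, ω y x = - (starRingEnd ℂ) (ω x y))
    (hnd : ∀ x, (∀ y, ω x y = 0) → x = 0)
    (W l m : Submodule ℂ X)
    (hWco : ann ω W ≤ W)
    (hl : l = ann ω l) (hm : m = ann ω m)
    [FiniteDimensional ℂ ↥(l ⊓ m)] [FiniteDimensional ℂ (X ⧸ (l ⊔ m))]
    (hidx : Module.finrank ℂ ↥(l ⊓ m) = Module.finrank ℂ (X ⧸ (l ⊔ m)))
    (h1 : ann ω W ≤ l) (h2 : l ≤ W) :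
    (FiniteDimensional ℂ ↥(ann ω W ⊓ m) ∧
     FiniteDimensional ℂ (X ⧸ (W ⊔ m)) ∧
     Module.finrank ℂ ↥(ann ω W ⊓ m) = Module.finrank ℂ (X ⧸ (W ⊔ m))) ∧
    W ⊔ m = ann ω (ann ω W) ⊔ m ∧
    -- R_W(λ) is Lagrangian in W/W^ω:
    l = ann ω l ⊓ W ∧
    -- R_W(μ) is Lagrangian in W/W^ω:
    (m ⊓ W ⊔ ann ω W) = ann ω (m ⊓ W ⊔ ann ω W) ⊓ W ∧
    -- (R_W(λ), R_W(μ)) is a Fredholm pair in W/W^ω of index 0: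
    (FiniteDimensional ℂ
        ↥(l.map (ann ω W).mkQ ⊓ (m ⊓ W ⊔ ann ω W).map (ann ω W).mkQ) ∧
     FiniteDimensional ℂ
        ↥((W.map (ann ω W).mkQ).map
            (l.map (ann ω W).mkQ ⊔ (m ⊓ W ⊔ ann ω W).map (ann ω W).mkQ).mkQ) ∧
     Module.finrank ℂ
        ↥(l.map (ann ω W).mkQ ⊓ (m ⊓ W ⊔ ann ω W).map (ann ω W).mkQ)
       = Module.finrank ℂ
          ↥((W.map (ann ω W).mkQ).map
              (l.map (ann ω W).mkQ ⊔ (m ⊓ W ⊔ ann ω W).map (ann ω W).mkQ).mkQ)) := by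
  classical
  open Module Submodule LinearMap in
  obtain ⟨fdA1, fdA2, hAeq⟩ := Red.partA ω hskew hnd hl hm hidx h1 h2
  haveI := fdA1
  haveI := fdA2
  refine ⟨⟨fdA1, fdA2, hAeq⟩, Red.partB ω hskew hnd hl hm hidx h2,
    by rw [← hl]; exact (inf_of_le_left h2).symm,
    Red.partD ω hskew hnd hl hm hidx hWco h1 h2, ?_⟩
  -- Part E
  set V₀ := ann ω W with hV₀def
  set K := l ⊔ m with hKdef
  set Rl := l.map V₀.mkQ with hRl
  set Rm := (m ⊓ W ⊔ V₀).map V₀.mkQ with hRm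
  -- lattice identities
  have hA : l ⊓ (m ⊓ W ⊔ V₀) = (l ⊓ m) ⊔ V₀ := by
    rw [inf_comm, sup_comm (m ⊓ W) V₀, sup_inf_assoc_of_le (m ⊓ W) h1, inf_assoc,
      inf_eq_right.mpr h2, sup_comm, inf_comm m l]
  have hB : l ⊔ (m ⊓ W ⊔ V₀) = (l ⊔ m) ⊓ W := by
    rw [sup_inf_assoc_of_le m h2, ← sup_assoc]
    exact sup_eq_left.mpr (h1.trans le_sup_left)
  -- the intersection of the reduced pair
  have hinf : Rl ⊓ Rm = (l ⊓ m).map V₀.mkQ := by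
    rw [hRl, hRm, Red.map_mkQ_inf le_sup_right, hA, Submodule.map_sup,
      Red.map_mkQ_self, sup_bot_eq]
  set f' : ↥(l ⊓ m) →ₗ[ℂ] (X ⧸ V₀) := V₀.mkQ ∘ₗ (l ⊓ m).subtype with hf'
  have hrange_f' : LinearMap.range f' = (l ⊓ m).map V₀.mkQ := by
    rw [hf', LinearMap.range_comp, Submodule.range_subtype]
  have hker_f' : LinearMap.ker f' = Submodule.comap (l ⊓ m).subtype (V₀ ⊓ (l ⊓ m)) := by
    ext w
    simp only [hf', LinearMap.mem_ker, LinearMap.comp_apply, Submodule.coe_subtype,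
      Submodule.mkQ_apply, Submodule.Quotient.mk_eq_zero, Submodule.mem_comap,
      Submodule.mem_inf]
    exact ⟨fun h => ⟨h, w.2⟩, fun h => h.1⟩
  have hVm : V₀ ⊓ (l ⊓ m) = V₀ ⊓ m := by
    rw [← inf_assoc, inf_eq_left.mpr h1]
  have star1 : finrank ℂ ↥((l ⊓ m).map V₀.mkQ) + finrank ℂ ↥(V₀ ⊓ m)
      = finrank ℂ ↥(l ⊓ m) := by
    have h := LinearMap.finrank_range_add_finrank_ker f'
    rw [hrange_f', hker_f'] at h
    rwa [(Submodule.comapSubtypeEquivOfLe (inf_le_right : V₀ ⊓ (l ⊓ m) ≤ l ⊓ m)).finrank_eq,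
      hVm] at h
  -- the image of W in the double quotient
  set ρ := (Rl ⊔ Rm).mkQ with hρ
  set g := ρ ∘ₗ (V₀.mkQ ∘ₗ W.subtype) with hg
  set g' := K.mkQ ∘ₗ W.subtype with hg'
  have hrange_g : LinearMap.range g = (W.map V₀.mkQ).map ρ := by
    rw [hg, LinearMap.range_comp, LinearMap.range_comp, Submodule.range_subtype]
  have hrange_g' : LinearMap.range g' = W.map K.mkQ := by
    rw [hg', LinearMap.range_comp, Submodule.range_subtype]
  have hRsup : Rl ⊔ Rm = ((l ⊔ m) ⊓ W).map V₀.mkQ := by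
    rw [hRl, hRm, ← Submodule.map_sup, hB]
  have hV0lmW : V₀ ≤ (l ⊔ m) ⊓ W := le_inf (h1.trans le_sup_left) (h1.trans h2)
  have hkerg : LinearMap.ker g = LinearMap.ker g' := by
    ext w
    simp only [hg, hg', LinearMap.mem_ker, LinearMap.comp_apply, Submodule.coe_subtype,
      Submodule.mkQ_apply, hρ, Submodule.Quotient.mk_eq_zero]
    rw [hRsup]
    constructor
    · intro h
      have hmem : (w : X) ∈ V₀ ⊔ ((l ⊔ m) ⊓ W) := by
        rw [← Submodule.comap_map_mkQ V₀ ((l ⊔ m) ⊓ W)]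
        exact h
      rw [sup_eq_right.mpr hV0lmW] at hmem
      rw [hKdef]
      exact hmem.1
    · intro h
      exact Submodule.mem_map_of_mem (Submodule.mem_inf.mpr ⟨h, w.2⟩)
  have echain : finrank ℂ ↥(LinearMap.range g) = finrank ℂ ↥(LinearMap.range g') := by
    calc finrank ℂ ↥(LinearMap.range g) = finrank ℂ (↥W ⧸ LinearMap.ker g) :=
          g.quotKerEquivRange.finrank_eq.symm
      _ = finrank ℂ (↥W ⧸ LinearMap.ker g') :=
          (Submodule.quotEquivOfEq _ _ hkerg).finrank_eq
      _ = finrank ℂ ↥(LinearMap.range g') := g'.quotKerEquivRange.finrank_eq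
  have hQW : W.map K.mkQ = (W ⊔ m).map K.mkQ := by
    rw [Submodule.map_sup, Red.map_mkQ_eq_bot_of_le (le_sup_right : m ≤ K), sup_bot_eq]
  have star2 : finrank ℂ ((X ⧸ K) ⧸ (W ⊔ m).map K.mkQ)
      + finrank ℂ ↥((W ⊔ m).map K.mkQ) = finrank ℂ (X ⧸ K) :=
    Submodule.finrank_quotient_add_finrank _
  have star3 : finrank ℂ ((X ⧸ K) ⧸ (W ⊔ m).map K.mkQ) = finrank ℂ (X ⧸ (W ⊔ m)) :=
    (Submodule.quotientQuotientEquivQuotient K (W ⊔ m) (sup_le_sup_right h2 m)).finrank_eq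
  -- finite-dimensionality of the two sides
  haveI hfd_inf : FiniteDimensional ℂ ↥((l ⊓ m).map V₀.mkQ) := by
    rw [← hrange_f']
    exact Module.Finite.of_surjective f'.rangeRestrict f'.surjective_rangeRestrict
  haveI hfd_rg' : FiniteDimensional ℂ ↥(LinearMap.range g') := by
    rw [hrange_g']
    infer_instance
  haveI hfd_rg : FiniteDimensional ℂ ↥(LinearMap.range g) :=
    Module.Finite.equiv ((g'.quotKerEquivRange.symm.trans
      (Submodule.quotEquivOfEq _ _ hkerg.symm)).trans g.quotKerEquivRange)
  refine ⟨by rw [hinf]; exact hfd_inf, by rw [← hrange_g]; exact hfd_rg, ?_⟩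
  rw [hinf, ← hrange_g, echain, hrange_g', hQW]
  -- arithmetic
  have A4 : finrank ℂ ↥(V₀ ⊓ m) = finrank ℂ (X ⧸ (W ⊔ m)) := hAeq
  omega
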